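/- For every n ∈ ℕ, LPO^[n] <_W LPO^[n+1] (i.e., LPO^[n] ≤_W LPO^[n+1] and LPO^[n+1] is not Weihrauch reducible to LPO^[n]); moreover the same holds for continuous Weihrauch reducibility: LPO^[n] <*_W LPO^[n+1]. -/

import Mathlib

/-- Baire space. -/
abbrev Baire := ℕ → ℕ

/-- A problem: a partial multivalued function on Baire space, given as the
solution-set map; the domain is the set of instances with nonempty solution set. -/
def Problem := Baire → Set Baire

/-- Domain of a problem. -/
def Dom (f : Problem) : Set Baire := {x | (f x).Nonempty}

/-- A standard computable pairing of two sequences (interleaving). -/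
def pair (x y : Baire) : Baire := fun n => if n % 2 = 0 then x (n / 2) else y (n / 2)

/-- Initial segment of length `m` of a sequence. -/
def initSeg (x : Baire) (m : ℕ) : List ℕ := (List.range m).map x

/-- `F` is (the restriction to `D` of) a partial computable function on Baire space:
there is a computable monotone oracle functional computing `F x` from prefixes of `x`,
correctly and consistently, for every `x ∈ D`. -/
def ComputableOn (F : Baire → Baire) (D : Set Baire) : Prop :=
  ∃ φ : List ℕ → ℕ → Option ℕ, Computable₂ φ ∧
    ∀ x ∈ D, ∀ n : ℕ,
      (∃ m, φ (initSeg x m) n = some (F x n)) ∧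
      (∀ m v, φ (initSeg x m) n = some v → v = F x n)

/-- Weihrauch reducibility `f ≤_W g`, with the partial computable forward functional `k`
defined on `Dom f` and the partial computable backward functional `h` defined on all
pairs `⟨x, y⟩` with `x ∈ Dom f` and `y` a `g`-solution of `k x`. -/
def WRed (f g : Problem) : Prop :=
  ∃ h k : Baire → Baire,
    ComputableOn k (Dom f) ∧
    ComputableOn h {p | ∃ x ∈ Dom f, ∃ y ∈ g (k x), p = pair x y} ∧
    ∀ x ∈ Dom f, k x ∈ Dom g ∧ ∀ y ∈ g (k x), h (pair x y) ∈ f x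

/-- Weihrauch equivalence. -/
def WEquiv (f g : Problem) : Prop := WRed f g ∧ WRed g f

/-- Continuous Weihrauch reducibility `f ≤*_W g`: as `WRed` but the functionals
need only be partial continuous (continuous on their domains, Baire space carrying
the product topology). -/
def ContWRed (f g : Problem) : Prop :=
  ∃ h k : Baire → Baire,
    ContinuousOn k (Dom f) ∧
    ContinuousOn h {p | ∃ x ∈ Dom f, ∃ y ∈ g (k x), p = pair x y} ∧
    ∀ x ∈ Dom f, k x ∈ Dom g ∧ ∀ y ∈ g (k x), h (pair x y) ∈ f x

/-- Continuous Weihrauch equivalence. -/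
def ContWEquiv (f g : Problem) : Prop := ContWRed f g ∧ ContWRed g f

/-- Composition of problems: `dom (f ∘ g) = {x ∈ dom g : g x ⊆ dom f}` and
`(f ∘ g) x = {z : ∃ y ∈ g x, z ∈ f y}`. -/
def pcomp (f g : Problem) : Problem :=
  fun x => {z | g x ⊆ Dom f ∧ ∃ y ∈ g x, z ∈ f y}

/-- The identity problem. -/
def idp : Problem := fun x => {x}

/-- `p` is (a representative of) the compositional product `f * g`: the maximum,
with respect to `≤_W`, of `{f' ∘ g' : f' ≤_W f, g' ≤_W g}`. -/
def IsCompProd (f g p : Problem) : Prop :=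
  (∃ f' g', WRed f' f ∧ WRed g' g ∧ WEquiv p (pcomp f' g')) ∧
  (∀ f' g', WRed f' f → WRed g' g → WRed (pcomp f' g') p)

/-- `IsIter f n p` : `p` is (a representative of) `f^[n]`, the compositional product of
`n` copies of `f`, with `f^[0] := id`. -/
def IsIter (f : Problem) : ℕ → Problem → Prop
  | 0, p => p = idp
  | n + 1, p => ∃ q, IsIter f n q ∧ IsCompProd f q p

/-- The constant sequence with value `n`. -/
def cseq (n : ℕ) : Baire := fun _ => n

/-- The limited principle of omniscience. -/
def LPO : Problem := fun x =>
  {y | ((∃ n, x n = 0) ∧ y = cseq 0) ∨ ((∀ n, x n ≠ 0) ∧ y = cseq 1)}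

/-- The lesser limited principle of omniscience. -/
def LLPO : Problem := fun x =>
  {y | (∀ i j, x i ≠ 0 → x j ≠ 0 → i = j) ∧
       ((y = cseq 0 ∧ ∀ i, Even i → x i = 0) ∨
        (y = cseq 1 ∧ ∀ i, Odd i → x i = 0))}

/-- Turing reducibility between points of Baire space: `x` is computable from
oracle `y`. -/
def TuringLE (x y : Baire) : Prop :=
  ∃ φ : List ℕ → ℕ → Option ℕ, Computable₂ φ ∧
    ∀ n : ℕ, (∃ m, φ (initSeg y m) n = some (x n)) ∧
      (∀ m v, φ (initSeg y m) n = some v → v = x n)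

/-- Mutual Turing reducibility: `x` and `y` have the same Turing degree. -/
def TuringEquiv (x y : Baire) : Prop := TuringLE x y ∧ TuringLE y x

/-- Strict Turing reducibility. -/
def TuringLT (x y : Baire) : Prop := TuringLE x y ∧ ¬ TuringLE y x

/-- The problem `w_a`, for `a` a representative of a (non-zero) Turing degree. -/
def w (a : Baire) : Problem := fun x =>
  {y | (Computable x ∧ ¬ Computable y) ∨ (¬ Computable x ∧ TuringEquiv y a)}

/-- `k`-weak continuity of a problem. -/
def WeaklyContinuous (k : ℕ) (f : Problem) : Prop :=
  ∀ x ∈ Dom f, ∀ y : ℕ → Baire, (∀ n, y n ∈ Dom f) →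
    Filter.Tendsto y Filter.atTop (nhds x) →
    ∃ u ∈ f x, ∀ l < k, ∀ m : ℕ, ∃ n ≥ m,
      ∃ v ∈ f (y (n * k + l)), initSeg u m = initSeg v m

/-- Product of two problems. -/
def prodP (f g : Problem) : Problem := fun z =>
  {w | ∃ x y u v, z = pair x y ∧ w = pair u v ∧ u ∈ f x ∧ v ∈ g y}

/-- `powP f n` : the product of `n` copies of `f` (for `n ≥ 1`). -/
def powP (f : Problem) : ℕ → Problem
  | 0 => idp
  | 1 => f
  | n + 2 => prodP f (powP f (n + 1))

/-- A problem `f` is `k`-continuous: it has a realizer `r` (defined on a domain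
`D ⊇ Dom f`) together with a partition of `D` into at most `k` pieces (given by a
coloring `c`) such that `r` is continuous on each piece. -/
def kContinuous (k : ℕ) (f : Problem) : Prop :=
  ∃ (D : Set Baire) (r : Baire → Baire) (c : Baire → Fin k),
    Dom f ⊆ D ∧ (∀ x ∈ Dom f, r x ∈ f x) ∧
    ∀ i : Fin k, ContinuousOn r {x ∈ D | c x = i}

/-! Lower bound by counting mind changes. Call a realizer ranked with `m` levels if it comes with
an upper semicontinuous rank `< m` on whose level sets it is continuous. Such ranks pull back along
continuous reductions, `LPO` has one with 2 levels, and composition multiplies the number of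
levels (rank the composite lexicographically), so `LPO^[n]` has a ranked realizer with `2^n`
levels. On the other hand, counting the zeros of a sequence up to `2^n - 1` reduces to `LPO^[n]`:
count every second zero up to `2^(n-1) - 1` with `LPO^[n-1]`, then ask `LPO` whether one more zero
follows. Any ranked realizer of this count needs more than `2^n - 1` levels, because a zero can be
added arbitrarily close to any sequence with fewer zeros, which changes the answer and so must
lower the rank. Hence `LPO^[n+1]` is not even continuously reducible to `LPO^[n]`, while
`LPO^[n] ≤_W LPO^[n+1]` follows from `id ≤_W LPO`. -/

open Filter Topology

section BaireSpace

def evens (p : Baire) : Baire := fun n => p (2 * n)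

def odds (p : Baire) : Baire := fun n => p (2 * n + 1)

@[simp] lemma pair_two_mul (x y : Baire) (n : ℕ) : pair x y (2 * n) = x n := by
  simp [pair]

@[simp] lemma pair_two_mul_add_one (x y : Baire) (n : ℕ) : pair x y (2 * n + 1) = y n := by
  simp [pair, Nat.add_mod, Nat.add_div]

@[simp] lemma evens_pair (x y : Baire) : evens (pair x y) = x := by
  funext n; simp [evens]

@[simp] lemma odds_pair (x y : Baire) : odds (pair x y) = y := by
  funext n; simp [odds]

@[simp] lemma initSeg_length (x : Baire) (m : ℕ) : (initSeg x m).length = m := by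
  simp [initSeg]

lemma initSeg_getD (x : Baire) {i m : ℕ} (h : i < m) (d : ℕ) :
    (initSeg x m).getD i d = x i := by
  simp [initSeg, h]

lemma initSeg_succ (x : Baire) (m : ℕ) :
    initSeg x (m + 1) = x 0 :: initSeg (fun n => x (n + 1)) m := by
  simp [initSeg, List.range_succ_eq_map, List.map_map]

lemma initSeg_congr {x y : Baire} {m : ℕ} (h : ∀ i < m, y i = x i) :
    initSeg y m = initSeg x m :=
  List.map_congr_left fun i hi => h i (List.mem_range.mp hi)

lemma take_initSeg (x : Baire) (i m : ℕ) : (initSeg x m).take i = initSeg x (min i m) := by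
  rw [initSeg, initSeg, ← List.map_take, List.take_range]

lemma exists_cylinder_subset {x : Baire} {s : Set Baire} (hs : s ∈ 𝓝 x) :
    ∃ N, PiNat.cylinder x N ⊆ s := by
  obtain ⟨_, ⟨y, N, rfl⟩, hx, hsub⟩ :=
    (PiNat.isTopologicalBasis_cylinders _).mem_nhds_iff.mp hs
  exact ⟨N, PiNat.mem_cylinder_iff_eq.mp hx ▸ hsub⟩

end BaireSpace

section ComputableOn

lemma ComputableOn.continuousOn {F : Baire → Baire} {D : Set Baire} (h : ComputableOn F D) :
    ContinuousOn F D := by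
  obtain ⟨φ, -, hc⟩ := h
  intro x hx
  refine continuousWithinAt_pi.mpr fun n => ?_
  obtain ⟨⟨m, hm⟩, -⟩ := hc x hx n
  have hnear : ∀ᶠ y in 𝓝[D] x, F y n = F x n := by
    filter_upwards [mem_nhdsWithin_of_mem_nhds
      ((PiNat.isOpen_cylinder _ x m).mem_nhds (PiNat.self_mem_cylinder x m)),
      self_mem_nhdsWithin] with y hy hyD
    refine ((hc y hyD n).2 m _ ?_).symm
    rwa [initSeg_congr fun i hi => (PiNat.mem_cylinder_iff.mp hy i hi)]
  exact tendsto_pure.mpr hnear |>.mono_right (pure_le_nhds _)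

lemma computableOn_of_initSeg {F : Baire → Baire} {D : Set Baire} (g : List ℕ → ℕ → ℕ)
    (b : ℕ → ℕ) (hg : Computable₂ g) (hb : Computable b)
    (h : ∀ x ∈ D, ∀ n M, b n ≤ M → g (initSeg x M) n = F x n) : ComputableOn F D := by
  refine ⟨fun σ n => if b n ≤ σ.length then some (g σ n) else none, ?_,
    fun x hx n => ⟨⟨b n, ?_⟩, fun M v hv => ?_⟩⟩
  · have hle : Computable fun p : List ℕ × ℕ => decide (b p.2 ≤ p.1.length) :=
      (Primrec.nat_le.decide.to_comp).comp (hb.comp Computable.snd)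
        (Computable.list_length.comp Computable.fst)
    exact (Computable.cond hle (Computable.option_some.comp hg) (Computable.const none)).of_eq
      fun p => by by_cases h : b p.2 ≤ p.1.length <;> simp [h]
  · simp [h x hx n _ le_rfl]
  · by_cases hM : b n ≤ M <;> simp_all

lemma computableOn_reindex (f : ℕ → ℕ) (hf : Primrec f) (D : Set Baire) :
    ComputableOn (fun x n => x (f n)) D :=
  computableOn_of_initSeg (fun σ n => σ.getD (f n) 0) (fun n => f n + 1)
    ((Primrec.list_getD 0).comp Primrec.fst (hf.comp Primrec.snd)).to_comp
    (Primrec.succ.comp hf).to_comp fun x _ _ _ hM => initSeg_getD x (by omega) 0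

lemma computableOn_id (D : Set Baire) : ComputableOn id D :=
  computableOn_reindex id Primrec.id D

lemma computableOn_evens (D : Set Baire) : ComputableOn evens D :=
  computableOn_reindex (2 * ·) (Primrec.nat_mul.comp (Primrec.const 2) Primrec.id) D

lemma computableOn_odds (D : Set Baire) : ComputableOn odds D :=
  computableOn_reindex (2 * · + 1)
    (Primrec.succ.comp (Primrec.nat_mul.comp (Primrec.const 2) Primrec.id)) D

lemma computableOn_const (c : Baire) (hc : Computable c) (D : Set Baire) :
    ComputableOn (fun _ => c) D :=
  computableOn_of_initSeg (fun _ n => c n) (fun _ => 0) (hc.comp Computable.snd)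
    (Computable.const 0) fun _ _ _ _ _ => rfl

lemma ComputableOn.pair {F G : Baire → Baire} {D : Set Baire} (hF : ComputableOn F D)
    (hG : ComputableOn G D) : ComputableOn (fun x => pair (F x) (G x)) D := by
  obtain ⟨φ, hφ, hcF⟩ := hF
  obtain ⟨ψ, hψ, hcG⟩ := hG
  refine ⟨fun σ n => if n % 2 = 0 then φ σ (n / 2) else ψ σ (n / 2), ?_, fun x hx n => ?_⟩
  · have hpar : Computable fun p : List ℕ × ℕ => decide (p.2 % 2 = 0) :=
      (Primrec.eq.comp (Primrec.nat_mod.comp Primrec.snd (Primrec.const 2))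
        (Primrec.const 0)).decide.to_comp
    have hhalf : Computable fun p : List ℕ × ℕ => p.2 / 2 :=
      (Primrec.nat_div.comp Primrec.snd (Primrec.const 2)).to_comp
    exact (Computable.cond hpar (hφ.comp Computable.fst hhalf)
      (hψ.comp Computable.fst hhalf)).of_eq fun p => by by_cases h : p.2 % 2 = 0 <;> simp [h]
  · by_cases h : n % 2 = 0
    · simpa [_root_.pair, h] using hcF x hx (n / 2)
    · simpa [_root_.pair, h] using hcG x hx (n / 2)

end ComputableOn

section Composition

def firstSome (l : List (Option ℕ)) : Option ℕ := (l.filterMap id).head?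

lemma primrec_firstSome : Primrec firstSome :=
  Primrec.list_head?.comp (Primrec.listFilterMap Primrec.id Primrec.snd.to₂)

lemma mem_of_firstSome_eq_some {l : List (Option ℕ)} {v : ℕ} (h : firstSome l = some v) :
    some v ∈ l := by
  simpa using List.mem_of_mem_head? h

lemma firstSome_isSome {l : List (Option ℕ)} {v : ℕ} (h : some v ∈ l) :
    (firstSome l).isSome := by
  rw [firstSome, List.isSome_head?]
  exact List.ne_nil_of_mem (List.mem_filterMap.mpr ⟨_, h, rfl⟩)

lemma computable₂_map_range {α : Type*} [Primcodable α] {u : α → ℕ → Option ℕ}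
    (hu : Computable₂ u) : Computable₂ fun (a : α) (N : ℕ) => (List.range N).map (u a) := by
  refine (Computable.nat_rec (f := fun p : α × ℕ => p.2) (g := fun _ => [])
    (h := fun p q => q.2 ++ [u p.1 q.1]) Computable.snd (Computable.const _)
    (Primrec.list_concat.to_comp.comp (Computable.snd.comp Computable.snd)
      (hu.comp (Computable.fst.comp Computable.fst)
        (Computable.fst.comp Computable.snd))).to₂).of_eq fun ⟨a, N⟩ => ?_
  induction N with
  | zero => rfl
  | succ N ih => simp [List.range_succ, ← ih]

def stabilize (φ : List ℕ → ℕ → Option ℕ) (σ : List ℕ) (n : ℕ) : Option ℕ :=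
  firstSome ((List.range (σ.length + 1)).map fun i => φ (σ.take i) n)

lemma Computable₂.stabilize {φ : List ℕ → ℕ → Option ℕ} (hφ : Computable₂ φ) :
    Computable₂ (stabilize φ) := by
  have hquery : Computable₂ fun (p : List ℕ × ℕ) (i : ℕ) => φ (p.1.take i) p.2 :=
    hφ.comp (Primrec.list_take.to_comp.comp Computable.snd (Computable.fst.comp Computable.fst))
      (Computable.snd.comp Computable.fst)
  exact (primrec_firstSome.to_comp.comp ((computable₂_map_range hquery).comp Computable.id
    (Primrec.succ.comp (Primrec.list_length.comp Primrec.fst)).to_comp)).to₂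

def ComputesAt (φ : List ℕ → ℕ → Option ℕ) (x y : Baire) : Prop :=
  ∀ n, (∃ m, φ (initSeg x m) n = some (y n)) ∧
    ∀ m v, φ (initSeg x m) n = some v → v = y n

variable {φ ψ : List ℕ → ℕ → Option ℕ} {x y z : Baire}

lemma ComputesAt.stabilize_eq_some (h : ComputesAt φ x y) {M n v : ℕ}
    (hv : stabilize φ (initSeg x M) n = some v) : v = y n := by
  obtain ⟨i, -, hi⟩ := List.mem_map.mp (mem_of_firstSome_eq_some hv)
  rw [take_initSeg] at hi
  exact (h n).2 _ v hi

lemma ComputesAt.eventually_stabilize_eq (h : ComputesAt φ x y) (n : ℕ) :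
    ∀ᶠ M in atTop, stabilize φ (initSeg x M) n = some (y n) := by
  obtain ⟨m, hm⟩ := (h n).1
  filter_upwards [eventually_ge_atTop m] with M hM
  have hmem : some (y n) ∈ (List.range (M + 1)).map fun i => φ ((initSeg x M).take i) n :=
    List.mem_map.mpr ⟨m, List.mem_range.mpr (by omega), by rwa [take_initSeg, min_eq_left hM]⟩
  obtain ⟨v, hv⟩ := Option.isSome_iff_exists.mp (firstSome_isSome hmem)
  have hv' : stabilize φ (initSeg x M) n = some v := by simpa [stabilize] using hv
  rw [hv', h.stabilize_eq_some hv']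

def somePrefix (l : List (Option ℕ)) : List ℕ := (l.takeWhile Option.isSome).filterMap id

lemma primrec_somePrefix : Primrec somePrefix :=
  Primrec.listFilterMap (Primrec.list_takeWhile Primrec.option_isSome) Primrec.snd.to₂

lemma somePrefix_map_range {u : ℕ → Option ℕ} {y : Baire}
    (hu : ∀ j v, u j = some v → v = y j) (N : ℕ) :
    ∃ t, somePrefix ((List.range N).map u) = initSeg y t ∧
      ∀ k ≤ N, (∀ j < k, (u j).isSome) → k ≤ t := by
  induction N generalizing u y with
  | zero => exact ⟨0, rfl, fun k hk _ => hk⟩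
  | succ N ih =>
    rw [List.range_succ_eq_map, List.map_cons, List.map_map]
    cases h0 : u 0 with
    | none =>
      refine ⟨0, by simp [somePrefix, initSeg], fun k _ hk => ?_⟩
      by_contra! hpos
      simpa [h0] using hk 0 hpos
    | some v =>
      obtain ⟨t, ht, hkt⟩ := ih (u := u ∘ Nat.succ) (y := fun n => y (n + 1))
        fun j w hw => hu (j + 1) w hw
      refine ⟨t + 1, ?_, fun k hk hall => ?_⟩
      · simp only [somePrefix, List.takeWhile_cons, Option.isSome_some, if_true,
          List.filterMap_cons, id] at ht ⊢
        rw [ht, initSeg_succ, hu 0 v h0]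
      · rcases k with _ | k
        · omega
        · have := hkt k (by omega) fun j hj => hall (j + 1) (by omega)
          omega

/-- The longest initial segment of the output of `φ` that is determined by `σ`. -/
def knownOutput (φ : List ℕ → ℕ → Option ℕ) (σ : List ℕ) : List ℕ :=
  somePrefix ((List.range σ.length).map (stabilize φ σ))

lemma Computable₂.knownOutput (hφ : Computable₂ φ) : Computable (knownOutput φ) :=
  primrec_somePrefix.to_comp.comp ((computable₂_map_range hφ.stabilize).comp Computable.id
    Primrec.list_length.to_comp)

lemma ComputesAt.exists_knownOutput_eq (h : ComputesAt φ x y) (M : ℕ) :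
    ∃ t, knownOutput φ (initSeg x M) = initSeg y t ∧
      ∀ k ≤ M, (∀ j < k, (stabilize φ (initSeg x M) j).isSome) → k ≤ t := by
  simpa [knownOutput] using somePrefix_map_range (fun j v hv => h.stabilize_eq_some hv) M

lemma ComputesAt.eventually_le_knownOutput (h : ComputesAt φ x y) (k : ℕ) :
    ∀ᶠ M in atTop, ∃ t, k ≤ t ∧ knownOutput φ (initSeg x M) = initSeg y t := by
  filter_upwards [eventually_ge_atTop k,
    (Finset.range k).eventually_all.mpr fun j _ => h.eventually_stabilize_eq j] with M hkM hM
  obtain ⟨t, ht, hkt⟩ := h.exists_knownOutput_eq M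
  exact ⟨t, hkt k hkM fun j hj => by simp [hM j (Finset.mem_range.mpr hj)], ht⟩

/-- The composite runs `ψ` on the part of `y` that `φ` has determined from the prefix `σ` of `x`;
`stabilize` makes every answer, once given, persist on longer prefixes. -/
lemma ComputesAt.comp (hxy : ComputesAt φ x y) (hyz : ComputesAt ψ y z) :
    ComputesAt (fun σ n => stabilize ψ (knownOutput φ σ) n) x z := by
  intro n
  refine ⟨?_, fun M v hv => ?_⟩
  · obtain ⟨m, hm⟩ := eventually_atTop.mp (hyz.eventually_stabilize_eq n)
    obtain ⟨M, t, hmt, ht⟩ := (hxy.eventually_le_knownOutput m).exists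
    exact ⟨M, by simp only [ht, hm t hmt]⟩
  · obtain ⟨t, ht, -⟩ := hxy.exists_knownOutput_eq M
    simp only [ht] at hv
    exact hyz.stabilize_eq_some hv

lemma ComputableOn.comp {F G : Baire → Baire} {A B : Set Baire} (hF : ComputableOn F A)
    (hG : ComputableOn G B) (hmap : Set.MapsTo G B A) : ComputableOn (fun x => F (G x)) B := by
  obtain ⟨ψ, hψ, hcF⟩ := hF
  obtain ⟨φ, hφ, hcG⟩ := hG
  exact ⟨fun σ n => stabilize ψ (knownOutput φ σ) n,
    (hψ.stabilize.comp (hφ.knownOutput.comp Computable.fst) Computable.snd).to₂,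
    fun x hx => ComputesAt.comp (hcG x hx) (hcF (G x) (hmap hx))⟩

end Composition

section Weihrauch

lemma WRed.refl (f : Problem) : WRed f f :=
  ⟨odds, id, computableOn_id _, computableOn_odds _, fun x hx => ⟨hx, fun y hy => by simpa⟩⟩

lemma WRed.trans {f g e : Problem} (hfg : WRed f g) (hge : WRed g e) : WRed f e := by
  obtain ⟨H₁, K₁, hK₁, hH₁, hr₁⟩ := hfg
  obtain ⟨H₂, K₂, hK₂, hH₂, hr₂⟩ := hge
  set P : Set Baire := {p | ∃ x ∈ Dom f, ∃ z ∈ e (K₂ (K₁ x)), p = pair x z}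
  have hP : ∀ p ∈ P, evens p ∈ Dom f ∧ odds p ∈ e (K₂ (K₁ (evens p))) := by
    rintro p ⟨x, hx, z, hz, rfl⟩
    simpa using ⟨hx, hz⟩
  have hK₁P : ComputableOn (fun p => K₁ (evens p)) P :=
    hK₁.comp (computableOn_evens P) fun p hp => (hP p hp).1
  have hH₂P : ComputableOn (fun p => H₂ (pair (K₁ (evens p)) (odds p))) P :=
    hH₂.comp (hK₁P.pair (computableOn_odds P)) fun p hp =>
      ⟨_, (hr₁ _ (hP p hp).1).1, _, (hP p hp).2, rfl⟩
  refine ⟨_, _, hK₂.comp hK₁ fun x hx => (hr₁ x hx).1,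
    hH₁.comp ((computableOn_evens P).pair hH₂P) fun p hp =>
      ⟨_, (hP p hp).1, _, (hr₂ _ (hr₁ _ (hP p hp).1).1).2 _ (hP p hp).2, rfl⟩,
    fun x hx => ⟨(hr₂ _ (hr₁ x hx).1).1, fun z hz => ?_⟩⟩
  simpa using (hr₁ x hx).2 _ ((hr₂ _ (hr₁ x hx).1).2 z hz)

lemma WRed.contWRed {f g : Problem} (h : WRed f g) : ContWRed f g :=
  let ⟨H, K, hK, hH, hr⟩ := h
  ⟨H, K, hK.continuousOn, hH.continuousOn, hr⟩

lemma mem_dom_LPO (x : Baire) : x ∈ Dom LPO := by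
  by_cases h : ∃ n, x n = 0
  · exact ⟨cseq 0, Or.inl ⟨h, rfl⟩⟩
  · exact ⟨cseq 1, Or.inr ⟨not_exists.mp h, rfl⟩⟩

lemma pcomp_idp (f : Problem) : pcomp idp f = f := by
  funext x
  ext z
  have hdom : f x ⊆ Dom idp := fun y _ => ⟨y, rfl⟩
  simp [pcomp, idp, hdom]

lemma wRed_idp_LPO : WRed idp LPO :=
  ⟨evens, id, computableOn_id _, computableOn_evens _,
    fun x _ => ⟨mem_dom_LPO x, fun y _ => by simp [idp]⟩⟩

lemma IsIter.wRed {f p q : Problem} {n : ℕ} (hp : IsIter f n p) (hq : IsIter f n q) :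
    WRed p q := by
  induction n generalizing p q with
  | zero => rw [show p = idp from hp, show q = idp from hq]; exact WRed.refl idp
  | succ n ih =>
    obtain ⟨p', hp', ⟨f₁, g₁, hf₁, hg₁, hpeq⟩, -⟩ := hp
    obtain ⟨q', hq', hqmax⟩ := hq
    exact hpeq.1.trans (hqmax.2 f₁ g₁ hf₁ (hg₁.trans (ih hp' hq')))

lemma IsIter.wRed_succ {f p q : Problem} {n : ℕ} (hid : WRed idp f) (hp : IsIter f n p)
    (hq : IsIter f (n + 1) q) : WRed p q := by
  obtain ⟨q', hq', hqmax⟩ := hq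
  have hq'q : WRed q' q := by simpa [pcomp_idp] using hqmax.2 idp q' hid (WRed.refl q')
  exact (hp.wRed hq').trans hq'q

end Weihrauch

section ZeroCount

def zeroCount (x : Baire) (N : ℕ) : ℕ := (initSeg x N).count 0

lemma primrec_count_zero : Primrec fun l : List ℕ => l.count 0 :=
  (Primrec.list_length.comp
    (Primrec.listFilter (Primrec.eq.comp Primrec.id (Primrec.const 0)))).of_eq
    fun l => by simp [List.count_eq_length_filter, ← beq_iff_eq]

lemma zeroCount_zero (x : Baire) : zeroCount x 0 = 0 := rfl

lemma zeroCount_succ (x : Baire) (N : ℕ) :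
    zeroCount x (N + 1) = zeroCount x N + if x N = 0 then 1 else 0 := by
  simp [zeroCount, initSeg, List.range_succ, List.count_singleton]

lemma zeroCount_mono (x : Baire) : Monotone (zeroCount x) :=
  monotone_nat_of_le_succ fun N => by rw [zeroCount_succ]; omega

def HasZeros (x : Baire) (j : ℕ) : Prop := ∃ N, j ≤ zeroCount x N

lemma HasZeros.mono {x : Baire} {i j : ℕ} (hij : i ≤ j) (hj : HasZeros x j) : HasZeros x i :=
  let ⟨N, hN⟩ := hj
  ⟨N, hij.trans hN⟩

open Classical in
/-- `min m (number of zeros of x)`. -/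
noncomputable def zerosUpTo (m : ℕ) (x : Baire) : ℕ := Nat.findGreatest (HasZeros x) m

lemma zerosUpTo_le (m : ℕ) (x : Baire) : zerosUpTo m x ≤ m := by
  classical exact Nat.findGreatest_le m

lemma le_zerosUpTo_iff {m j : ℕ} {x : Baire} (hj : j ≤ m) :
    j ≤ zerosUpTo m x ↔ HasZeros x j := by
  classical
  refine ⟨fun h => HasZeros.mono h ?_, Nat.le_findGreatest hj⟩
  exact Nat.findGreatest_spec m.zero_le ⟨0, Nat.zero_le _⟩

lemma zerosUpTo_eq {m s : ℕ} {x : Baire} (hs : s ≤ m) (hle : ∀ N, zeroCount x N ≤ s)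
    (hex : ∃ N, s ≤ zeroCount x N) : zerosUpTo m x = s := by
  refine le_antisymm ?_ ((le_zerosUpTo_iff hs).mpr hex)
  by_contra! hlt
  obtain ⟨N, hN⟩ := (le_zerosUpTo_iff (hlt.trans_le (zerosUpTo_le m x))).mp hlt
  exact absurd (hle N) (by omega)

lemma zerosUpTo_cseq_one (m : ℕ) : zerosUpTo m (cseq 1) = 0 := by
  refine zerosUpTo_eq m.zero_le (fun N => ?_) ⟨0, le_rfl⟩
  induction N with
  | zero => rfl
  | succ N ih => simpa [zeroCount_succ, cseq] using ih

/-- Keeps every second zero of `x`. -/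
def halveZeros (x : Baire) : Baire := fun n =>
  if x n = 0 ∧ Even (zeroCount x (n + 1)) then 0 else 1

lemma zeroCount_halveZeros (x : Baire) (N : ℕ) :
    zeroCount (halveZeros x) N = zeroCount x N / 2 := by
  induction N with
  | zero => simp [zeroCount_zero]
  | succ N ih =>
    rw [zeroCount_succ, zeroCount_succ x, ih]
    by_cases h : x N = 0
    · simp only [halveZeros, zeroCount_succ, h, if_true, true_and, Nat.even_iff]
      by_cases hpar : (zeroCount x N + 1) % 2 = 0 <;> simp [hpar] <;> omega
    · simp [halveZeros, h, zeroCount_succ]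

lemma hasZeros_halveZeros_iff (x : Baire) (j : ℕ) :
    HasZeros (halveZeros x) j ↔ HasZeros x (2 * j) := by
  simp only [HasZeros, zeroCount_halveZeros]
  exact exists_congr fun N => by omega

open Classical in
lemma zerosUpTo_two_mul_add_one (m : ℕ) (x : Baire) :
    zerosUpTo (2 * m + 1) x = 2 * zerosUpTo m (halveZeros x) +
      if HasZeros x (2 * zerosUpTo m (halveZeros x) + 1) then 1 else 0 := by
  set K := zerosUpTo m (halveZeros x)
  have hKm : K ≤ m := zerosUpTo_le m _
  have hK : HasZeros x (2 * K) :=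
    (hasZeros_halveZeros_iff x K).mp ((le_zerosUpTo_iff hKm).mp le_rfl)
  have hle := zerosUpTo_le (2 * m + 1) x
  split_ifs with hodd
  · refine le_antisymm ?_ ((le_zerosUpTo_iff (by omega)).mpr hodd)
    by_contra! hlt
    have hK2 : HasZeros x (2 * (K + 1)) :=
      (le_zerosUpTo_iff (m := 2 * m + 1) (by omega)).mp (by omega)
    have := (le_zerosUpTo_iff (m := m) (by omega)).mpr ((hasZeros_halveZeros_iff x _).mpr hK2)
    omega
  · refine le_antisymm ?_ ((le_zerosUpTo_iff (by omega)).mpr hK)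
    by_contra! hlt
    exact hodd ((le_zerosUpTo_iff (m := 2 * m + 1) (by omega)).mp (by omega))

lemma frequently_zerosUpTo_eq_succ {m : ℕ} {x : Baire} (h : zerosUpTo m x < m) :
    ∃ᶠ y in 𝓝 x, zerosUpTo m y = zerosUpTo m x + 1 := by
  set t := zerosUpTo m x
  have hbound : ∀ N, zeroCount x N ≤ t := fun N => by
    by_contra! hN
    exact absurd ((le_zerosUpTo_iff h).mpr ⟨N, hN⟩) (by omega)
  obtain ⟨N₀, hN₀⟩ := (le_zerosUpTo_iff h.le).mp le_rfl
  refine Filter.frequently_iff.mpr fun hU => ?_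
  obtain ⟨N, hN⟩ := exists_cylinder_subset hU
  -- keep `x` up to `M`, where all its zeros have appeared, then add one more zero
  set M := max N N₀
  set y : Baire := fun i => if i < M then x i else if i = M then 0 else 1
  have hcount : ∀ K, zeroCount y K = zeroCount x (min K M) + if M < K then 1 else 0 := by
    intro K
    induction K with
    | zero => rfl
    | succ K ih =>
      rw [zeroCount_succ, ih]
      rcases lt_trichotomy K M with hK | rfl | hK
      · simp [y, hK, zeroCount_succ, Nat.min_eq_left hK.le, hK.not_gt, show ¬ M < K + 1 by omega]
      · simp [y]
      · simp [y, hK, hK.not_gt, hK.ne', show M < K + 1 by omega, Nat.min_eq_right hK.le,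
          Nat.min_eq_right (show M ≤ K + 1 by omega)]
  have hxM : zeroCount x M = t :=
    le_antisymm (hbound M) (hN₀.trans (zeroCount_mono x (le_max_right _ _)))
  refine ⟨y, hN fun i hi => by simp [y, show i < M by omega],
    zerosUpTo_eq h (fun K => ?_) ⟨M + 1, ?_⟩⟩
  · rw [hcount]
    have := hbound (min K M)
    split_ifs <;> omega
  · simp [hcount, hxM]

end ZeroCount

section CountingReduction

def countZerosUpTo (m : ℕ) : Problem := fun x => {cseq (zerosUpTo m x)}

def halvingStep (m : ℕ) : Problem := fun x => {pair x (cseq (zerosUpTo m (halveZeros x)))}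

open Classical in
/-- Intended for `z = pair x (cseq K)`, so that `evens z = x` and `z 1 = K`. -/
noncomputable def oddZerosQuery : Problem := fun z =>
  {cseq (2 * z 1 + if HasZeros (evens z) (2 * z 1 + 1) then 1 else 0)}

open Classical in
lemma oddZerosQuery_pair (x : Baire) (K : ℕ) : oddZerosQuery (pair x (cseq K)) =
    {cseq (2 * K + if HasZeros x (2 * K + 1) then 1 else 0)} := by
  rw [oddZerosQuery, evens_pair, show pair x (cseq K) 1 = K from pair_two_mul_add_one _ _ 0]

lemma pcomp_oddZerosQuery_halvingStep (m : ℕ) :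
    pcomp oddZerosQuery (halvingStep m) = countZerosUpTo (2 * m + 1) := by
  funext x
  ext z
  have hdom : ∀ y, y ∈ Dom oddZerosQuery := fun y => ⟨_, rfl⟩
  simp [pcomp, halvingStep, oddZerosQuery_pair, countZerosUpTo, hdom,
    zerosUpTo_two_mul_add_one m x]

lemma computableOn_halveZeros (D : Set Baire) : ComputableOn halveZeros D := by
  refine computableOn_of_initSeg
    (fun σ n => if σ.getD n 0 = 0 ∧ (σ.take (n + 1)).count 0 % 2 = 0 then 0 else 1) (· + 1)
    ?_ Primrec.succ.to_comp fun x _ n M hM => ?_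
  · refine (Primrec.ite (PrimrecPred.and ?_ ?_) (Primrec.const 0) (Primrec.const 1)).to_comp
    · exact Primrec.eq.comp ((Primrec.list_getD 0).comp Primrec.fst Primrec.snd) (Primrec.const 0)
    · exact Primrec.eq.comp (Primrec.nat_mod.comp (primrec_count_zero.comp
        (Primrec.list_take.comp (Primrec.succ.comp Primrec.snd) Primrec.fst))
        (Primrec.const 2)) (Primrec.const 0)
  · simp only [initSeg_getD x hM, take_initSeg, min_eq_left hM, halveZeros, Nat.even_iff]
    rfl

lemma wRed_halvingStep (m : ℕ) : WRed (halvingStep m) (countZerosUpTo m) :=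
  ⟨id, halveZeros, computableOn_halveZeros _, computableOn_id _,
    fun x _ => ⟨⟨_, rfl⟩, fun y hy => by simp_all [halvingStep, countZerosUpTo]⟩⟩

def oddZerosInstance (z : Baire) : Baire := fun j =>
  if 2 * z 1 + 1 ≤ zeroCount (evens z) j then 0 else 1

lemma exists_oddZerosInstance_eq_zero_iff (z : Baire) :
    (∃ j, oddZerosInstance z j = 0) ↔ HasZeros (evens z) (2 * z 1 + 1) := by
  simp [oddZerosInstance, HasZeros]

lemma computableOn_oddZerosInstance (D : Set Baire) : ComputableOn oddZerosInstance D := by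
  refine computableOn_of_initSeg (fun σ j => if 2 * σ.getD 1 0 + 1 ≤
      ((List.range j).map fun i => σ.getD (2 * i) 0).count 0 then 0 else 1)
    (fun j => 2 * j + 2) ?_ ?_ fun z _ j M hM => ?_
  · refine (Primrec.ite (Primrec.nat_le.comp ?_ ?_) (Primrec.const 0) (Primrec.const 1)).to_comp
    · exact Primrec.succ.comp (Primrec.nat_mul.comp (Primrec.const 2)
        ((Primrec.list_getD 0).comp Primrec.fst (Primrec.const 1)))
    · exact primrec_count_zero.comp (Primrec.list_map (Primrec.list_range.comp Primrec.snd)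
        ((Primrec.list_getD 0).comp (Primrec.fst.comp Primrec.fst)
          (Primrec.nat_mul.comp (Primrec.const 2) Primrec.snd)).to₂)
  · exact (Primrec.succ.comp (Primrec.succ.comp
      (Primrec.nat_mul.comp (Primrec.const 2) Primrec.id))).to_comp
  · have hevens :
        ((List.range j).map fun i => (initSeg z M).getD (2 * i) 0) = initSeg (evens z) j :=
      List.map_congr_left fun i hi => initSeg_getD z (by simp at hi; omega) 0
    simp only [initSeg_getD z (show 1 < M by omega), hevens]
    rfl

/-- On `p = pair z y`, `p 2 = z 1` and `p 1 = y 0` is the answer of `LPO`. -/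
def oddZerosAnswer (p : Baire) : Baire := cseq (2 * p 2 + 1 - p 1)

lemma computableOn_oddZerosAnswer (D : Set Baire) : ComputableOn oddZerosAnswer D :=
  computableOn_of_initSeg (fun σ _ => 2 * σ.getD 2 0 + 1 - σ.getD 1 0) (fun _ => 3)
    (Primrec.nat_sub.comp (Primrec.succ.comp (Primrec.nat_mul.comp (Primrec.const 2)
      ((Primrec.list_getD 0).comp Primrec.fst (Primrec.const 2))))
      ((Primrec.list_getD 0).comp Primrec.fst (Primrec.const 1))).to_comp
    (Computable.const 3) fun p _ _ M hM => by
      simp only [initSeg_getD p (show 2 < M by omega), initSeg_getD p (show 1 < M by omega)]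
      rfl

lemma wRed_oddZerosQuery_LPO : WRed oddZerosQuery LPO := by
  refine ⟨oddZerosAnswer, oddZerosInstance, computableOn_oddZerosInstance _,
    computableOn_oddZerosAnswer _, fun z _ => ⟨mem_dom_LPO _, fun y hy => ?_⟩⟩
  have hanswer : oddZerosAnswer (pair z y) = cseq (2 * z 1 + 1 - y 0) := by
    rw [oddZerosAnswer, show pair z y 2 = z 1 from pair_two_mul z y 1,
      show pair z y 1 = y 0 from pair_two_mul_add_one z y 0]
  rw [oddZerosQuery, hanswer, Set.mem_singleton_iff, ← exists_oddZerosInstance_eq_zero_iff]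
  rcases hy with ⟨hzero, rfl⟩ | ⟨hnz, rfl⟩
  · simp [hzero, cseq]
  · simp [hnz, cseq]

lemma wRed_countZerosUpTo_zero_idp : WRed (countZerosUpTo 0) idp :=
  ⟨fun _ => cseq 0, id, computableOn_id _, computableOn_const _ (Computable.const 0) _,
    fun x _ => ⟨⟨x, rfl⟩, fun _ _ => by
      simp [countZerosUpTo, Nat.le_zero.mp (zerosUpTo_le 0 x)]⟩⟩

lemma IsIter.wRed_countZerosUpTo {n : ℕ} {q : Problem} (hq : IsIter LPO n q) :
    WRed (countZerosUpTo (2 ^ n - 1)) q := by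
  induction n generalizing q with
  | zero => rw [show q = idp from hq]; exact wRed_countZerosUpTo_zero_idp
  | succ n ih =>
    obtain ⟨q', hq', hqmax⟩ := hq
    have h := hqmax.2 _ _ wRed_oddZerosQuery_LPO ((wRed_halvingStep _).trans (ih hq'))
    rwa [pcomp_oddZerosQuery_halvingStep, show 2 * (2 ^ n - 1) + 1 = 2 ^ (n + 1) - 1 by
      rw [pow_succ]; have := n.one_le_two_pow; omega] at h

end CountingReduction

section RankedRealizer

lemma upperSemicontinuousWithinAt_iff_eventually_le {α : Type*} [TopologicalSpace α]
    {r : α → ℕ} {s : Set α} {x : α} :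
    UpperSemicontinuousWithinAt r s x ↔ ∀ᶠ y in 𝓝[s] x, r y ≤ r x :=
  ⟨fun h => (h _ (Nat.lt_succ_self _)).mono fun _ => Nat.le_of_lt_succ,
    fun h _ hy => h.mono fun _ h' => h'.trans_lt hy⟩

lemma continuous_pair : Continuous fun p : Baire × Baire => pair p.1 p.2 :=
  continuous_pi fun n => by
    by_cases h : n % 2 = 0 <;> simp only [pair, h, if_true, if_false] <;> fun_prop

/-- Computing such an `F` needs a mind change only where the rank `r` drops, hence fewer than
`m` of them. -/
def HasRankedRealizer (m : ℕ) (f : Problem) : Prop :=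
  ∃ (F : Baire → Baire) (r : Baire → ℕ), (∀ x ∈ Dom f, F x ∈ f x ∧ r x < m) ∧
    UpperSemicontinuousOn r (Dom f) ∧ ∀ i, ContinuousOn F {x ∈ Dom f | r x = i}

lemma HasRankedRealizer.of_contWRed {f g : Problem} {m : ℕ} (hred : ContWRed f g)
    (hg : HasRankedRealizer m g) : HasRankedRealizer m f := by
  obtain ⟨H, K, hK, hH, hr⟩ := hred
  obtain ⟨F, r, hF, hrusc, hFcont⟩ := hg
  have hKdom : Set.MapsTo K (Dom f) (Dom g) := fun x hx => (hr x hx).1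
  refine ⟨fun x => H (pair x (F (K x))), r ∘ K,
    fun x hx => ⟨(hr x hx).2 _ (hF _ (hKdom hx)).1, (hF _ (hKdom hx)).2⟩,
    hrusc.comp hK hKdom, fun i => ?_⟩
  have hFK : ContinuousOn (fun x => F (K x)) {x ∈ Dom f | r (K x) = i} :=
    (hFcont i).comp (hK.mono fun _ hx => hx.1) fun x hx => ⟨hKdom hx.1, hx.2⟩
  exact hH.comp (continuous_pair.comp_continuousOn (continuousOn_id.prodMk hFK))
    fun x hx => ⟨x, hx.1, _, (hF _ (hKdom hx.1)).1, rfl⟩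

lemma hasRankedRealizer_idp : HasRankedRealizer 1 idp :=
  ⟨id, fun _ => 0, fun _ _ => ⟨rfl, one_pos⟩, upperSemicontinuousOn_const,
    fun _ => continuousOn_id⟩

open Classical in
lemma hasRankedRealizer_LPO : HasRankedRealizer 2 LPO := by
  refine ⟨fun x => if ∃ n, x n = 0 then cseq 0 else cseq 1,
    fun x => if ∃ n, x n = 0 then 0 else 1,
    fun x _ => ⟨?_, by beta_reduce; split_ifs <;> omega⟩,
    fun x _ => upperSemicontinuousWithinAt_iff_eventually_le.mpr ?_, fun i => ?_⟩
  · by_cases h : ∃ n, x n = 0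
    · simp [LPO, h]
    · simp [LPO, not_exists.mp h]
  · by_cases h : ∃ n, x n = 0
    · obtain ⟨n, hn⟩ := h
      have hnear : ∀ᶠ y in 𝓝 x, y n = 0 :=
        (continuous_apply n).continuousAt.eventually_mem (isOpen_discrete {0} |>.mem_nhds hn)
      exact nhdsWithin_le_nhds <| hnear.mono fun y hy => by
        simp [show ∃ n, y n = 0 from ⟨n, hy⟩]
    · exact Eventually.of_forall fun y => by simp only [h, if_false]; split_ifs <;> omega
  · refine (continuousOn_const (c := if i = 0 then cseq 0 else cseq 1)).congr fun x hx => ?_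
    rw [← hx.2]
    split_ifs <;> simp_all

lemma HasRankedRealizer.comp {f g : Problem} {a b : ℕ} (hf : HasRankedRealizer a f)
    (hg : HasRankedRealizer b g) : HasRankedRealizer (a * b) (pcomp f g) := by
  obtain ⟨F, rf, hF, hrf, hFcont⟩ := hf
  obtain ⟨G, rg, hG, hrg, hGcont⟩ := hg
  have hdom : ∀ x ∈ Dom (pcomp f g), g x ⊆ Dom f ∧ x ∈ Dom g :=
    fun x ⟨_, hsub, y, hy, _⟩ => ⟨hsub, y, hy⟩
  have hGf : ∀ x ∈ Dom (pcomp f g), G x ∈ Dom f := fun x hx =>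
    (hdom x hx).1 (hG x (hdom x hx).2).1
  have hrfG : ∀ x ∈ Dom (pcomp f g), rf (G x) < a := fun x hx => (hF _ (hGf x hx)).2
  -- lexicographic rank: first the rank of `g` at `x`, then that of `f` at `G x`
  refine ⟨fun x => F (G x), fun x => a * rg x + rf (G x), fun x hx => ⟨?_, ?_⟩, ?_, ?_⟩
  · exact ⟨(hdom x hx).1, G x, (hG x (hdom x hx).2).1, (hF _ (hGf x hx)).1⟩
  · calc a * rg x + rf (G x) < a * (rg x + 1) := by rw [mul_add, mul_one]; linarith [hrfG x hx]
      _ ≤ a * b := Nat.mul_le_mul_left a (hG x (hdom x hx).2).2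
  · refine fun x hx => upperSemicontinuousWithinAt_iff_eventually_le.mpr ?_
    have hxg := (hdom x hx).2
    have hle : ∀ᶠ y in 𝓝[Dom (pcomp f g)] x, rg y ≤ rg x :=
      nhdsWithin_mono x (fun y hy => (hdom y hy).2)
        (upperSemicontinuousWithinAt_iff_eventually_le.mp (hrg x hxg))
    have hGlevel : ContinuousWithinAt G (Dom (pcomp f g) ∩ {y ∈ Dom g | rg y = rg x}) x :=
      (hGcont _ x ⟨hxg, rfl⟩).mono Set.inter_subset_right
    have hfle := hGlevel.tendsto_nhdsWithin (fun y hy => hGf y hy.1)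
      |>.eventually (upperSemicontinuousWithinAt_iff_eventually_le.mp (hrf _ (hGf x hx)))
    rw [nhdsWithin_inter', eventually_inf_principal] at hfle
    filter_upwards [hle, self_mem_nhdsWithin, hfle] with y hyle hy hyf
    rcases hyle.lt_or_eq with hlt | heq
    · calc a * rg y + rf (G y) ≤ a * (rg y + 1) := by rw [mul_add, mul_one]; linarith [hrfG y hy]
        _ ≤ a * rg x := Nat.mul_le_mul_left a hlt
        _ ≤ _ := Nat.le_add_right _ _
    · rw [heq]; exact Nat.add_le_add_left (hyf ⟨(hdom y hy).2, heq⟩) _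
  · intro j
    have hlevel : ∀ x ∈ {x ∈ Dom (pcomp f g) | a * rg x + rf (G x) = j},
        rg x = j / a ∧ rf (G x) = j % a := fun x hx =>
      ((Nat.div_mod_unique (by linarith [hrfG x hx.1])).mpr
        ⟨by linarith [hx.2], hrfG x hx.1⟩).imp Eq.symm Eq.symm
    exact (hFcont (j % a)).comp ((hGcont (j / a)).mono fun x hx => ⟨(hdom x hx.1).2,
      (hlevel x hx).1⟩) fun x hx => ⟨hGf x hx.1, (hlevel x hx).2⟩

lemma IsIter.hasRankedRealizer {n : ℕ} {p : Problem} (hp : IsIter LPO n p) :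
    HasRankedRealizer (2 ^ n) p := by
  induction n generalizing p with
  | zero => rw [show p = idp from hp]; exact hasRankedRealizer_idp
  | succ n ih =>
    obtain ⟨p', hp', ⟨f₁, g₁, hf₁, hg₁, hpeq⟩, -⟩ := hp
    rw [pow_succ']
    exact ((hasRankedRealizer_LPO.of_contWRed hf₁.contWRed).comp
      ((ih hp').of_contWRed hg₁.contWRed)).of_contWRed hpeq.1.contWRed

lemma dom_countZerosUpTo (m : ℕ) : Dom (countZerosUpTo m) = Set.univ :=
  Set.eq_univ_of_forall fun _ => ⟨_, rfl⟩

lemma lt_of_hasRankedRealizer_countZerosUpTo {m ℓ : ℕ}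
    (h : HasRankedRealizer ℓ (countZerosUpTo m)) : m < ℓ := by
  obtain ⟨F, r, hF, hr, hFcont⟩ := h
  simp only [dom_countZerosUpTo, Set.mem_univ, true_and, forall_const] at hF hFcont
  rw [dom_countZerosUpTo] at hr
  have hFx : ∀ x, F x = cseq (zerosUpTo m x) := fun x => (hF x).1
  -- an extra zero added close to `x` changes the output, so it must lower the rank
  have hdescent : ∀ x, zerosUpTo m x < m →
      ∃ y, zerosUpTo m y = zerosUpTo m x + 1 ∧ r y < r x := by
    intro x hx
    have hle : ∀ᶠ y in 𝓝 x, r y ≤ r x := by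
      simpa using upperSemicontinuousWithinAt_iff_eventually_le.mp (hr x (Set.mem_univ x))
    have hsame : ∀ᶠ y in 𝓝 x, r y = r x → F y 0 = F x 0 :=
      eventually_nhdsWithin_iff.mp (((continuous_apply 0).continuousAt.comp_continuousWithinAt
        (hFcont (r x) x rfl)) ((isOpen_discrete {F x 0}).mem_nhds rfl))
    obtain ⟨y, hy, hyle, hysame⟩ :=
      ((frequently_zerosUpTo_eq_succ hx).and_eventually (hle.and hsame)).exists
    refine ⟨y, hy, hyle.lt_of_ne fun heq => ?_⟩
    have := hysame heq
    simp only [hFx, cseq] at this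
    omega
  have hchain : ∀ t ≤ m, ∃ x, zerosUpTo m x = t ∧ r x + t < ℓ := by
    intro t ht
    induction t with
    | zero => exact ⟨cseq 1, zerosUpTo_cseq_one m, (hF _).2⟩
    | succ t ih =>
      obtain ⟨x, rfl, hx⟩ := ih (by omega)
      obtain ⟨y, hy, hyx⟩ := hdescent x (by omega)
      exact ⟨y, hy, by omega⟩
  obtain ⟨x, -, hx⟩ := hchain m le_rfl
  omega

end RankedRealizer

/-- For every `n`, `LPO^[n] <_W LPO^[n+1]`, and likewise `LPO^[n] <*_W LPO^[n+1]`. -/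
theorem lpo_iter_strict (n : ℕ) (p q : Problem)
    (hp : IsIter LPO n p) (hq : IsIter LPO (n + 1) q) :
    (WRed p q ∧ ¬ WRed q p) ∧ (ContWRed p q ∧ ¬ ContWRed q p) := by
  have hpq : WRed p q := hp.wRed_succ wRed_idp_LPO hq
  have hqp : ¬ ContWRed q p := fun hqp => by
    have hrank : HasRankedRealizer (2 ^ n) (countZerosUpTo (2 ^ (n + 1) - 1)) :=
      (hp.hasRankedRealizer.of_contWRed hqp).of_contWRed hq.wRed_countZerosUpTo.contWRed
    have hlt := lt_of_hasRankedRealizer_countZerosUpTo hrank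
    rw [pow_succ] at hlt
    have := n.one_le_two_pow
    omega
  exact ⟨⟨hpq, fun h => hqp h.contWRed⟩, hpq.contWRed, hqp⟩
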